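/- Fix positive integers m, n. For every time symmetric quantum operation Q from ℂ^m to ℂ^n, the map Θ(Q) := (n/m)·Q† is a time symmetric quantum operation from ℂ^n to ℂ^m; the resulting map Θ is a bijection from the set of time symmetric quantum operations from ℂ^m to ℂ^n onto the set of time symmetric quantum operations from ℂ^n to ℂ^m, satisfies Θ(p·Q + (1−p)·R) = p·Θ(Q) + (1−p)·Θ(R) for all such operations Q, R and all p ∈ [0,1], and maps the zero map to the zero map. -/

import Mathlib

open scoped ComplexOrder Kronecker
open Matrix

noncomputable section

/-- The space of linear maps from `m × m` complex matrices to `n × n` complex matrices. -/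
abbrev MatMap (m n : ℕ) := Matrix (Fin m) (Fin m) ℂ →ₗ[ℂ] Matrix (Fin n) (Fin n) ℂ

/-- The Choi matrix `Choi(Q) = Σ_{i,j} Q(E_{ij}) ⊗ E_{ij}` of a linear map between
matrix spaces. -/
def choi {m n : ℕ} (Q : MatMap m n) : Matrix (Fin n × Fin m) (Fin n × Fin m) ℂ :=
  Matrix.of fun p q => Q (Matrix.single p.2 q.2 1) p.1 q.1

/-- A linear map is completely positive if its Choi matrix is positive semidefinite. -/
def IsCP {m n : ℕ} (Q : MatMap m n) : Prop := (choi Q).PosSemidef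

/-- A quantum operation: a completely positive trace-non-increasing linear map. -/
def IsQOp {m n : ℕ} (Q : MatMap m n) : Prop :=
  IsCP Q ∧ ∀ ρ : Matrix (Fin m) (Fin m) ℂ, ρ.PosSemidef → (Q ρ).trace ≤ ρ.trace

/-- A quantum channel: a completely positive trace-preserving linear map. -/
def IsChannel {m n : ℕ} (Q : MatMap m n) : Prop :=
  IsCP Q ∧ ∀ ρ : Matrix (Fin m) (Fin m) ℂ, (Q ρ).trace = ρ.trace

/-- A density matrix: positive semidefinite with unit trace. -/
def IsDensity {ι : Type*} [Fintype ι] (ρ : Matrix ι ι ℂ) : Prop :=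
  ρ.PosSemidef ∧ ρ.trace = 1

/-- A rank-one orthogonal projection `|ψ⟩⟨ψ|` for a unit vector `ψ`. -/
def IsRankOneProj {d : ℕ} (P : Matrix (Fin d) (Fin d) ℂ) : Prop :=
  ∃ ψ : Fin d → ℂ, star ψ ⬝ᵥ ψ = 1 ∧ P = Matrix.vecMulVec ψ (star ψ)

/-- A state space symmetry: a bijection between the sets of density matrices that
preserves convex combinations. -/
def IsStateSymmetry {ι κ : Type*} [Fintype ι] [Fintype κ]
    (S : Matrix ι ι ℂ → Matrix κ κ ℂ) : Prop :=
  Set.BijOn S {ρ | IsDensity ρ} {ρ | IsDensity ρ} ∧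
  ∀ ρ σ : Matrix ι ι ℂ, IsDensity ρ → IsDensity σ → ∀ p : ℝ, 0 ≤ p → p ≤ 1 →
    S ((p : ℂ) • ρ + ((1 - p : ℝ) : ℂ) • σ) = (p : ℂ) • S ρ + ((1 - p : ℝ) : ℂ) • S σ

/-- An operation space symmetry: a bijection between the sets of quantum operations that
preserves convex combinations and maps the zero map to the zero map. -/
def IsOpSymmetry {m n m' n' : ℕ} (S : MatMap m n → MatMap m' n') : Prop :=
  Set.BijOn S {Q | IsQOp Q} {Q | IsQOp Q} ∧
  (∀ Q R : MatMap m n, IsQOp Q → IsQOp R → ∀ p : ℝ, 0 ≤ p → p ≤ 1 →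
    S ((p : ℂ) • Q + ((1 - p : ℝ) : ℂ) • R) = (p : ℂ) • S Q + ((1 - p : ℝ) : ℂ) • S R) ∧
  S 0 = 0

/-- Transport of a square matrix along an equality of dimensions. -/
def castMat {m n : ℕ} (h : m = n) (A : Matrix (Fin m) (Fin m) ℂ) :
    Matrix (Fin n) (Fin n) ℂ :=
  Matrix.reindex (finCongr h) (finCongr h) A

/-- The unitary channel `ρ ↦ U ρ U†` as a linear map. -/
def adjAction {d : ℕ} (U : Matrix (Fin d) (Fin d) ℂ) : MatMap d d where
  toFun ρ := U * ρ * Uᴴ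
  map_add' x y := by simp [Matrix.mul_add, Matrix.add_mul]
  map_smul' c x := by simp [Matrix.mul_smul, Matrix.smul_mul]

/-- The Hilbert–Schmidt adjoint of a linear map between matrix spaces; it is the unique
linear map satisfying `Tr[A† Q(B)] = Tr[(Q†(A))† B]` for all `A`, `B`. -/
def hsAdjoint {m n : ℕ} (Q : MatMap m n) : MatMap n m where
  toFun A := Matrix.of fun i j => ((Q (Matrix.single i j 1))ᴴ * A).trace
  map_add' A B := by
    ext i j
    simp [Matrix.mul_add, Matrix.trace_add]
  map_smul' c A := by
    ext i j
    simp [Matrix.mul_smul, Matrix.trace_smul]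

open scoped Classical in
/-- The positive semidefinite square root (junk value `0` on non-psd inputs). -/
noncomputable def psqrt {d : ℕ} (M : Matrix (Fin d) (Fin d) ℂ) : Matrix (Fin d) (Fin d) ℂ :=
  if h : M.PosSemidef then
    (h.1.eigenvectorUnitary : Matrix (Fin d) (Fin d) ℂ) *
      Matrix.diagonal ((RCLike.ofReal : ℝ → ℂ) ∘ (Real.sqrt ·) ∘ h.1.eigenvalues) *
      (star h.1.eigenvectorUnitary : Matrix (Fin d) (Fin d) ℂ)
  else 0

/-- The fidelity `F(ρ,σ) = (Tr[√(√ρ σ √ρ)])²` of two density matrices. -/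
noncomputable def fidelity {d : ℕ} (ρ σ : Matrix (Fin d) (Fin d) ℂ) : ℝ :=
  ((psqrt (psqrt ρ * σ * psqrt ρ)).trace.re) ^ 2

/-- The double transpose `ρ ↦ [Φ(ρᵀ)]ᵀ` of a linear map between matrix spaces. -/
def doubleTransposeMap {m n : ℕ} (Φ : MatMap m n) : MatMap m n where
  toFun ρ := (Φ ρᵀ)ᵀ
  map_add' x y := by simp
  map_smul' c x := by simp

/-- A time symmetric quantum operation: completely positive, with `Q†(I_n) ≤ I_m`
and `Q(I_m/m) ≤ I_n/n` in the Loewner order. -/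
def IsTSOp {m n : ℕ} (Q : MatMap m n) : Prop :=
  IsCP Q ∧ ((1 : Matrix (Fin m) (Fin m) ℂ) - hsAdjoint Q 1).PosSemidef ∧
    ((n : ℂ)⁻¹ • (1 : Matrix (Fin n) (Fin n) ℂ)
      - Q ((m : ℂ)⁻¹ • (1 : Matrix (Fin m) (Fin m) ℂ))).PosSemidef

/-!
`Q ↦ Q†` is a conjugate-linear involution preserving complete positivity: the Choi matrix of
`Q†` is the entrywise conjugate of the Choi matrix of `Q` with its tensor factors swapped.
The weight `n/m` makes `Θ` an involution as well, and it exchanges the two defining inequalities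
of a time symmetric operation: `Q(I/m) ≤ I/n` becomes `Θ(Q)†(I) ≤ I`, and `Q†(I) ≤ I` becomes
`Θ(Q)(I/n) ≤ I/m`. Real weights commute with `†`, so `Θ` preserves convex combinations.
-/

def theta (m n : ℕ) (Q : MatMap m n) : MatMap n m := ((n : ℂ) / (m : ℂ)) • hsAdjoint Q

section

variable {m n : ℕ}

lemma hsAdjoint_apply (Q : MatMap m n) (A : Matrix (Fin n) (Fin n) ℂ) (i j : Fin m) :
    hsAdjoint Q A i j = ∑ a, ∑ b, star (Q (single i j 1) b a) * A b a := by
  simp only [hsAdjoint, LinearMap.coe_mk, AddHom.coe_mk, of_apply, trace, diag, mul_apply,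
    conjTranspose_apply]

lemma hsAdjoint_single_apply (Q : MatMap m n) (i j : Fin m) (a b : Fin n) :
    hsAdjoint Q (single a b 1) i j = star (Q (single i j 1) a b) := by
  simp [hsAdjoint_apply, single, ite_and]

lemma hsAdjoint_hsAdjoint (Q : MatMap m n) : hsAdjoint (hsAdjoint Q) = Q := by
  refine ext_linearMap ℂ fun a b => LinearMap.ext_ring ?_
  ext i j
  simp only [LinearMap.comp_apply, singleLinearMap_apply, hsAdjoint_single_apply, star_star]

lemma hsAdjoint_add (Q R : MatMap m n) : hsAdjoint (Q + R) = hsAdjoint Q + hsAdjoint R := by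
  ext A i j
  simp [hsAdjoint_apply, add_mul, Finset.sum_add_distrib]

lemma hsAdjoint_smul (c : ℂ) (Q : MatMap m n) : hsAdjoint (c • Q) = star c • hsAdjoint Q := by
  ext A i j
  simp [hsAdjoint_apply, Finset.mul_sum, mul_assoc]

lemma hsAdjoint_ofReal_smul (r : ℝ) (Q : MatMap m n) :
    hsAdjoint ((r : ℂ) • Q) = (r : ℂ) • hsAdjoint Q := by
  rw [hsAdjoint_smul, Complex.star_def, Complex.conj_ofReal]

lemma hsAdjoint_zero : hsAdjoint (0 : MatMap m n) = 0 := by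
  simpa using hsAdjoint_smul 0 (0 : MatMap m n)

lemma choi_smul (c : ℂ) (Q : MatMap m n) : choi (c • Q) = c • choi Q := rfl

lemma choi_hsAdjoint (Q : MatMap m n) :
    choi (hsAdjoint Q) = (choi Q)ᴴᵀ.submatrix Prod.swap Prod.swap := by
  ext p q
  simp [choi, hsAdjoint_single_apply]

lemma IsCP.smul {Q : MatMap m n} (hQ : IsCP Q) {c : ℂ} (hc : 0 ≤ c) : IsCP (c • Q) := by
  rw [IsCP, choi_smul]
  exact PosSemidef.smul hQ hc

lemma IsCP.hsAdjoint {Q : MatMap m n} (hQ : IsCP Q) : IsCP (hsAdjoint Q) := by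
  rw [IsCP, choi_hsAdjoint]
  exact hQ.conjTranspose.transpose.submatrix _

lemma hsAdjoint_theta (Q : MatMap m n) : hsAdjoint (theta m n Q) = ((n : ℂ) / (m : ℂ)) • Q := by
  rw [theta, hsAdjoint_smul, hsAdjoint_hsAdjoint, star_div₀, Complex.star_def,
    Complex.conj_natCast, Complex.conj_natCast]

lemma theta_theta (hm : m ≠ 0) (hn : n ≠ 0) (Q : MatMap m n) : theta n m (theta m n Q) = Q := by
  rw [theta, hsAdjoint_theta, smul_smul, div_mul_div_cancel₀ (by exact_mod_cast hn),
    div_self (by exact_mod_cast hm), one_smul]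

lemma theta_add (Q R : MatMap m n) : theta m n (Q + R) = theta m n Q + theta m n R := by
  rw [theta, hsAdjoint_add, smul_add, theta, theta]

lemma theta_ofReal_smul (r : ℝ) (Q : MatMap m n) :
    theta m n ((r : ℂ) • Q) = (r : ℂ) • theta m n Q := by
  rw [theta, hsAdjoint_ofReal_smul, smul_comm, theta]

lemma isTSOp_theta (hn : n ≠ 0) {Q : MatMap m n} (hQ : IsTSOp Q) : IsTSOp (theta m n Q) := by
  obtain ⟨hCP, hAdj, hMap⟩ := hQ
  have hn' : (n : ℂ) ≠ 0 := by exact_mod_cast hn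
  refine ⟨hCP.hsAdjoint.smul (by positivity), ?_, ?_⟩
  · have : 1 - hsAdjoint (theta m n Q) 1 = (n : ℂ) • ((n : ℂ)⁻¹ • 1 - Q ((m : ℂ)⁻¹ • 1)) := by
      rw [hsAdjoint_theta, smul_sub, smul_inv_smul₀ hn', LinearMap.smul_apply, _root_.map_smul,
        smul_smul, div_eq_mul_inv]
    rw [this]
    exact hMap.smul (by positivity)
  · have : (m : ℂ)⁻¹ • 1 - theta m n Q ((n : ℂ)⁻¹ • 1) = (m : ℂ)⁻¹ • (1 - hsAdjoint Q 1) := by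
      rw [theta, LinearMap.smul_apply, _root_.map_smul, smul_smul,
        show (n : ℂ) / m * (n : ℂ)⁻¹ = (m : ℂ)⁻¹ by field_simp, smul_sub]
    rw [this]
    exact hAdj.smul (by positivity)

lemma theta_bijOn (hm : m ≠ 0) (hn : n ≠ 0) :
    Set.BijOn (theta m n) {Q : MatMap m n | IsTSOp Q} {Q : MatMap n m | IsTSOp Q} :=
  Set.InvOn.bijOn ⟨fun Q _ => theta_theta hm hn Q, fun Q _ => theta_theta hn hm Q⟩
    (fun _ => isTSOp_theta hn) (fun _ => isTSOp_theta hm)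

end

/-- The map `Θ(Q) = (n/m)·Q†` maps time symmetric quantum operations from `ℂ^m` to `ℂ^n`
to time symmetric quantum operations from `ℂ^n` to `ℂ^m`; it is a bijection between the
two sets, preserves convex combinations, and maps the zero map to the zero map. -/
theorem theta_is_symmetry_of_TSOps (m n : ℕ) (hm : 0 < m) (hn : 0 < n) :
    (∀ Q : MatMap m n, IsTSOp Q → IsTSOp (((n : ℂ) / (m : ℂ)) • hsAdjoint Q)) ∧
    Set.BijOn (fun Q : MatMap m n => ((n : ℂ) / (m : ℂ)) • hsAdjoint Q)
      {Q : MatMap m n | IsTSOp Q} {Q : MatMap n m | IsTSOp Q} ∧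
    (∀ Q R : MatMap m n, IsTSOp Q → IsTSOp R → ∀ p : ℝ, 0 ≤ p → p ≤ 1 →
      ((n : ℂ) / (m : ℂ)) • hsAdjoint ((p : ℂ) • Q + ((1 - p : ℝ) : ℂ) • R)
        = (p : ℂ) • (((n : ℂ) / (m : ℂ)) • hsAdjoint Q)
          + ((1 - p : ℝ) : ℂ) • (((n : ℂ) / (m : ℂ)) • hsAdjoint R)) ∧
    ((n : ℂ) / (m : ℂ)) • hsAdjoint (0 : MatMap m n) = 0 := by
  refine ⟨fun _ => isTSOp_theta hn.ne', theta_bijOn hm.ne' hn.ne', fun Q R _ _ p _ _ => ?_, ?_⟩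
  · change theta m n _ = (p : ℂ) • theta m n Q + ((1 - p : ℝ) : ℂ) • theta m n R
    rw [theta_add, theta_ofReal_smul, theta_ofReal_smul]
  · rw [hsAdjoint_zero, smul_zero]
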